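/- Let G be an abelian bi-Δ-group and k ≤ n. For every x ∈ 𝔥_k G, all the faces d_0(H_{k,n}(x)), d_1(H_{k,n}(x)), …, d_n(H_{k,n}(x)) coincide; in particular H_{k,n}(x) ∈ 𝔥_n G, so the James–Hopf homomorphism restricts to a group homomorphism H_{k,n} : 𝔥_k G → 𝔥_n G. -/

import Mathlib

universe u

section

variable (G : ℕ → Type u) [∀ n, AddCommGroup (G n)]
variable (d : ∀ n : ℕ, ℕ → (G (n + 1) →+ G n))
variable (δ : ∀ n : ℕ, ℕ → (G n →+ G (n + 1)))

/-- The axioms of an (abelian, additively written) bi-Δ-group: a sequence of groups `G n`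
with faces `d n j : G (n+1) →+ G n` (for `j ≤ n+1`) and cofaces
`δ n i : G n →+ G (n+1)` (for `i ≤ n+1`), satisfying the simplicial-type identities. -/
structure IsBiDelta : Prop where
  face_face : ∀ n i j : ℕ, i ≤ j → j ≤ n + 1 → ∀ x : G (n + 2),
    d n i (d (n + 1) (j + 1) x) = d n j (d (n + 1) i x)
  coface_coface : ∀ n i j : ℕ, j ≤ i → i ≤ n + 1 → ∀ x : G n,
    δ (n + 1) j (δ n i x) = δ (n + 1) (i + 1) (δ n j x)
  face_coface_lt : ∀ n i j : ℕ, j ≤ i → i ≤ n + 1 → ∀ x : G (n + 1),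
    d (n + 1) j (δ (n + 1) (i + 1) x) = δ n i (d n j x)
  face_coface_eq : ∀ n i : ℕ, i ≤ n + 1 → ∀ x : G n, d n i (δ n i x) = x
  face_coface_gt : ∀ n i j : ℕ, i ≤ j → j ≤ n + 1 → ∀ x : G (n + 1),
    d (n + 1) (j + 1) (δ (n + 1) i x) = δ n i (d n j x)

/-- The `n`-th Cohen group `𝔥_n G = {x ∈ G_n : d_0 x = d_1 x = ⋯ = d_n x}`
(with `𝔥_0 G = G_0`), as a subgroup of `G n`. -/
def cohenAll : ∀ n : ℕ, AddSubgroup (G n)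
  | 0 => ⊤
  | m + 1 =>
    { carrier := { x : G (m + 1) | ∀ j, j ≤ m + 1 → d m j x = d m 0 x }
      add_mem' := fun {a b} ha hb j hj => by
        simp only [Set.mem_setOf_eq] at ha hb ⊢
        rw [map_add, map_add, ha j hj, hb j hj]
      zero_mem' := fun j hj => by simp
      neg_mem' := fun {a} ha j hj => by
        simp only [Set.mem_setOf_eq] at ha ⊢
        rw [map_neg, map_neg, ha j hj] }

/-- Iterated cofaces `d^{c(r-1)} d^{c(r-2)} ⋯ d^{c(0)}(x)` along a tuple `c` of coface
indices (`c 0` is applied first, at level `k`). -/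
def iterCoface (k : ℕ) : ∀ r : ℕ, (Fin r → ℕ) → G k → G (k + r)
  | 0, _, x => x
  | r + 1, c, x => δ (k + r) (c (Fin.last r)) (iterCoface k r (fun i => c i.castSucc) x)

open Classical in
/-- The James–Hopf homomorphism `H_{k,n} : G_k → G_n` (`n = k + r`): the sum, over all
strictly increasing tuples `0 ≤ i_1 < i_2 < ⋯ < i_{n-k} ≤ n`, of
`d^{i_{n-k}} d^{i_{n-k-1}} ⋯ d^{i_1}(x)`. -/
noncomputable def jamesHopf (k r : ℕ) (x : G k) : G (k + r) :=
  ∑ c ∈ Finset.univ.filter (fun c : Fin r → Fin (k + r + 1) => StrictMono c),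
    iterCoface G δ k r (fun i => (c i : ℕ)) x

end

/-!
Write `T_m(x)` for the sum of the coface words on `x` all of whose indices are `< m`. Splitting off
the top coface gives `T_{m+1} = T_m + δ^m T_m`, and `H_{k,n}(x)` is the level-`n` value of
`T_{n+1}(x)`. Pushing a face `d_j` through this recursion with the bi-Δ identities shows, by
induction on `m`, that `d_j T_{m+1}(x) = T_m(x) + Q_m` for every `j ≤ m`: the words containing `j`
lose that coface, while in the others `d_j` travels down to `x`. For `x ∈ 𝔥_k` with `k ≥ 1` every
face of `x` is `d_0 x`, so `Q_m = T_m(d_0 x)`; for `k = 0` exactly one word misses `j`, and it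
collapses to `δ^n ⋯ δ^1 (d_1 δ^0 x)` because `d_0 δ^1 = d_1 δ^0` on `G_0`. Either way
`d_j H_{k,n}(x)` does not depend on `j`.
-/

open Finset

open Classical in
theorem sum_strictMono_fin_succ {M : Type*} [AddCommMonoid M] (r m : ℕ)
    (f : (Fin (r + 1) → ℕ) → M) :
    ∑ c ∈ univ.filter (fun c : Fin (r + 1) → Fin (m + 1) => StrictMono c), f (fun i => c i) =
      ∑ c ∈ univ.filter (fun c : Fin (r + 1) → Fin m => StrictMono c), f (fun i => c i) +
      ∑ c ∈ univ.filter (fun c : Fin r → Fin m => StrictMono c),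
        f (Fin.snoc (fun i => (c i : ℕ)) m) := by
  rw [← sum_filter_not_add_sum_filter _ (fun c => c (Fin.last r) = Fin.last m)]
  simp only [filter_filter]
  congr 1
  · symm
    refine sum_bij' (fun c _ i => (c i).castSucc)
      (fun c hc i => (c i).castPred ?_) ?_ ?_ ?_ ?_ ?_
    · simp only [mem_filter, mem_univ, true_and] at hc
      exact ((hc.1.monotone (Fin.le_last i)).trans_lt (Fin.lt_last_iff_ne_last.2 hc.2)).ne
    · intro c hc
      simp only [mem_filter, mem_univ, true_and] at hc ⊢
      exact ⟨Fin.strictMono_castSucc.comp hc, (Fin.castSucc_lt_last _).ne⟩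
    · intro c hc
      simp only [mem_filter, mem_univ, true_and] at hc ⊢
      exact Fin.strictMono_castPred_comp _ hc.1
    all_goals intro c _; simp
  · symm
    refine sum_bij' (fun c _ => Fin.snoc (fun i => (c i).castSucc) (Fin.last m))
      (fun c hc i => (c i.castSucc).castPred ?_) ?_ ?_ ?_ ?_ ?_
    · simp only [mem_filter, mem_univ, true_and] at hc
      rw [← hc.2]
      exact (hc.1 (Fin.castSucc_lt_last i)).ne
    · intro c hc
      simp only [mem_filter, mem_univ, true_and] at hc ⊢
      refine ⟨fun a b hab => ?_, by simp⟩
      induction b using Fin.lastCases with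
      | last =>
        obtain ⟨a, rfl⟩ := Fin.exists_castSucc_eq.2 hab.ne
        simp
      | cast b =>
        obtain ⟨a, rfl⟩ := Fin.exists_castSucc_eq.2 (hab.trans (Fin.castSucc_lt_last b)).ne
        simpa using hc (Fin.castSucc_lt_castSucc_iff.1 hab)
    · intro c hc
      simp only [mem_filter, mem_univ, true_and] at hc ⊢
      exact Fin.strictMono_castPred_comp _ (hc.1.comp Fin.strictMono_castSucc)
    · intro c _
      simp
    · intro c hc
      simp only [mem_filter, mem_univ, true_and] at hc
      ext i : 1
      induction i using Fin.lastCases <;> simp [hc.2]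
    · intro c _
      congr 1
      ext i : 1
      induction i using Fin.lastCases <;> simp

section

variable {G : ℕ → Type u} [∀ n, AddCommGroup (G n)]
variable {d : ∀ n : ℕ, ℕ → (G (n + 1) →+ G n)} {δ : ∀ n : ℕ, ℕ → (G n →+ G (n + 1))}

/-- `cofaceSum δ x m n` is the sum of the words `δ^{i_r} ⋯ δ^{i_1} x` from level `k` up to level `n`
with `i_1 < ⋯ < i_r < m`; it vanishes below level `k`. -/
def cofaceSum (δ : ∀ n : ℕ, ℕ → (G n →+ G (n + 1))) {k : ℕ} (x : G k) : ℕ → ∀ n, G n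
  | 0, n => Pi.single k x n
  | m + 1, 0 => cofaceSum δ x m 0
  | m + 1, n + 1 => cofaceSum δ x m (n + 1) + δ n m (cofaceSum δ x m n)

theorem cofaceSum_zero {k : ℕ} (x : G k) (n : ℕ) : cofaceSum δ x 0 n = Pi.single k x n := rfl

theorem cofaceSum_succ_succ {k : ℕ} (x : G k) (m n : ℕ) :
    cofaceSum δ x (m + 1) (n + 1) = cofaceSum δ x m (n + 1) + δ n m (cofaceSum δ x m n) :=
  rfl

theorem cofaceSum_of_lt {k : ℕ} (x : G k) {n : ℕ} (hn : n < k) (m : ℕ) :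
    cofaceSum δ x m n = 0 := by
  induction m generalizing n with
  | zero => exact Pi.single_eq_of_ne hn.ne _
  | succ m ih =>
    cases n with
    | zero => exact ih hn
    | succ n => rw [cofaceSum_succ_succ, ih hn, ih (by omega), map_zero, add_zero]

theorem cofaceSum_self {k : ℕ} (x : G k) (m : ℕ) : cofaceSum δ x m k = x := by
  induction m with
  | zero => exact Pi.single_eq_same _ _
  | succ m ih =>
    cases k with
    | zero => exact ih
    | succ k => rw [cofaceSum_succ_succ, ih, cofaceSum_of_lt x k.lt_succ_self, map_zero, add_zero]

theorem iterCoface_succ {k r : ℕ} (c : Fin (r + 1) → ℕ) (x : G k) :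
    iterCoface G δ k (r + 1) c x =
      δ (k + r) (c (Fin.last r)) (iterCoface G δ k r (Fin.init c) x) :=
  rfl

theorem iterCoface_add {k r : ℕ} (c : Fin r → ℕ) (x y : G k) :
    iterCoface G δ k r c (x + y) = iterCoface G δ k r c x + iterCoface G δ k r c y := by
  induction r with
  | zero => rfl
  | succ r ih => simp only [iterCoface_succ, ih, map_add]

open Classical in
theorem sum_iterCoface_eq_cofaceSum {k : ℕ} (x : G k) (r m : ℕ) :
    ∑ c ∈ univ.filter (fun c : Fin r → Fin m => StrictMono c),
      iterCoface G δ k r (fun i => c i) x = cofaceSum δ x m (k + r) := by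
  induction r generalizing m with
  | zero =>
    rw [filter_true_of_mem fun c _ => Subsingleton.strictMono c, Fintype.sum_unique]
    exact (cofaceSum_self x m).symm
  | succ r ih =>
    induction m with
    | zero =>
      rw [cofaceSum_zero, Pi.single_eq_of_ne (by omega), univ_eq_empty, filter_empty, sum_empty]
    | succ m ihm =>
      rw [sum_strictMono_fin_succ r m (fun c => iterCoface G δ k (r + 1) c x), ihm]
      refine (congrArg (cofaceSum δ x m (k + r + 1) + ·) ?_).trans
        (cofaceSum_succ_succ x m (k + r)).symm
      rw [← ih m, map_sum]
      simp only [iterCoface_succ, Fin.snoc_last, Fin.init_snoc]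

theorem jamesHopf_eq_cofaceSum (k r : ℕ) (x : G k) :
    jamesHopf G δ k r x = cofaceSum δ x (k + r + 1) (k + r) :=
  sum_iterCoface_eq_cofaceSum x r (k + r + 1)

theorem jamesHopf_add (k r : ℕ) (x y : G k) :
    jamesHopf G δ k r (x + y) = jamesHopf G δ k r x + jamesHopf G δ k r y := by
  simp only [jamesHopf, iterCoface_add, sum_add_distrib]

/-- The recursion is only asked for while `m ≤ n + 1`: beyond that range the family `Q` of the
case `k = 0` below stops satisfying it. -/
def IsCofaceRecursive (δ : ∀ n : ℕ, ℕ → (G n →+ G (n + 1))) (P : ℕ → ∀ n, G n) : Prop :=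
  ∀ m n, m ≤ n + 1 → P (m + 1) (n + 1) = P m (n + 1) + δ n m (P m n)

theorem isCofaceRecursive_cofaceSum {k : ℕ} (x : G k) : IsCofaceRecursive δ (cofaceSum δ x) :=
  fun _ _ _ => rfl

namespace IsCofaceRecursive

variable {P Q : ℕ → ∀ n, G n}

theorem face_eq_of_le (h : IsBiDelta G d δ) (hP : IsCofaceRecursive δ P)
    (hQ : IsCofaceRecursive δ Q) (h₀ : ∀ n j, j ≤ n + 1 → d n j (P 0 (n + 1)) = Q 0 n)
    (h₁ : d 0 1 (P 1 1) = Q 1 0) :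
    ∀ m n j, m ≤ j → j ≤ n + 1 → d n j (P m (n + 1)) = Q m n := by
  intro m
  induction m with
  | zero => exact fun n j _ hj => h₀ n j hj
  | succ m ih =>
    intro n j hmj hjn
    cases n with
    | zero =>
      obtain ⟨rfl, rfl⟩ : m = 0 ∧ j = 1 := by omega
      exact h₁
    | succ n =>
      obtain ⟨j, rfl⟩ : ∃ j', j = j' + 1 := ⟨j - 1, by omega⟩
      rw [hP m (n + 1) (by omega), map_add, ih (n + 1) (j + 1) (by omega) hjn,
        h.face_coface_gt n m j (by omega) (by omega), ih n j (by omega) (by omega),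
        hQ m n (by omega)]

theorem face_succ_eq_of_ge (h : IsBiDelta G d δ) (hP : IsCofaceRecursive δ P)
    (hQ : IsCofaceRecursive δ Q) (h₀ : ∀ n j, j ≤ n + 1 → d n j (P 0 (n + 1)) = Q 0 n)
    (h₁ : d 0 1 (P 1 1) = Q 1 0) (h₂ : d 0 0 (P 2 1) = P 1 0 + Q 1 0) :
    ∀ m n j, j ≤ m → m ≤ n + 1 → d n j (P (m + 1) (n + 1)) = P m n + Q m n := by
  have diag : ∀ m n, m ≤ n + 1 → d n m (P (m + 1) (n + 1)) = P m n + Q m n := fun m n hmn => by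
    rw [hP m n hmn, map_add, h.face_coface_eq n m hmn,
      hP.face_eq_of_le h hQ h₀ h₁ m n m le_rfl hmn, add_comm]
  intro m
  induction m with
  | zero =>
    intro n j hj hn
    obtain rfl : j = 0 := by omega
    exact diag 0 n hn
  | succ m ih =>
    intro n j hjm hmn
    rcases hjm.eq_or_lt with rfl | hjm
    · exact diag _ n hmn
    cases n with
    | zero =>
      obtain ⟨rfl, rfl⟩ : m = 0 ∧ j = 0 := by omega
      exact h₂
    | succ n =>
      rw [hP (m + 1) (n + 1) hmn, map_add, ih (n + 1) j (by omega) (by omega),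
        h.face_coface_lt n m j (by omega) (by omega), ih n j (by omega) (by omega), map_add,
        hP m n (by omega), hQ m n (by omega)]
      abel

end IsCofaceRecursive

theorem mem_cohenAll_succ {n : ℕ} {x : G (n + 1)} :
    x ∈ cohenAll G d (n + 1) ↔ ∀ j ≤ n + 1, d n j x = d n 0 x :=
  Iff.rfl

theorem face_cofaceSum_of_mem_cohenAll (h : IsBiDelta G d δ) {k : ℕ} {x : G (k + 1)}
    (hx : x ∈ cohenAll G d (k + 1)) {m n j : ℕ} (hjm : j ≤ m) (hmn : m ≤ n + 1) :
    d n j (cofaceSum δ x (m + 1) (n + 1)) = cofaceSum δ x m n + cofaceSum δ (d k 0 x) m n := by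
  have h₀ : ∀ n j, j ≤ n + 1 → d n j (cofaceSum δ x 0 (n + 1)) = cofaceSum δ (d k 0 x) 0 n := by
    intro n j hj
    rcases eq_or_ne n k with rfl | hn
    · simpa only [cofaceSum_zero, Pi.single_eq_same] using mem_cohenAll_succ.1 hx j hj
    · simp only [cofaceSum_zero, Pi.single_eq_of_ne (by omega : n + 1 ≠ k + 1),
        Pi.single_eq_of_ne hn, map_zero]
  have bottom : ∀ m, cofaceSum δ x m 0 = 0 := cofaceSum_of_lt x k.succ_pos
  have h₁ : d 0 1 (cofaceSum δ x 1 1) = cofaceSum δ (d k 0 x) 1 0 := by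
    rw [cofaceSum_succ_succ, bottom, map_zero, add_zero, h₀ 0 1 le_rfl]
    rfl
  have h₂ : d 0 0 (cofaceSum δ x 2 1) = cofaceSum δ x 1 0 + cofaceSum δ (d k 0 x) 1 0 := by
    simp only [cofaceSum_succ_succ, bottom, map_zero, add_zero, zero_add]
    exact h₀ 0 0 (by omega)
  exact (isCofaceRecursive_cofaceSum x).face_succ_eq_of_ge h (isCofaceRecursive_cofaceSum _)
    h₀ h₁ h₂ m n j hjm hmn

theorem face_zero_coface_one (h : IsBiDelta G d δ) (x : G 0) :
    d 0 0 (δ 0 1 x) = d 0 1 (δ 0 0 x) := by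
  have h₁ : d 0 0 (δ 0 1 x) = d 0 1 (δ 0 0 (d 0 0 (δ 0 1 x))) := by
    calc d 0 0 (δ 0 1 x)
        = d 0 0 (d 1 2 (δ 1 1 (δ 0 1 x))) := by
          rw [h.coface_coface 0 1 1 le_rfl (by omega), h.face_coface_eq 1 2 (by omega)]
      _ = d 0 1 (δ 0 0 (d 0 0 (δ 0 1 x))) := by
          rw [h.face_face 0 0 1 (by omega) (by omega), h.face_coface_lt 0 0 0 le_rfl (by omega)]
  have h₂ : d 0 1 (δ 0 0 x) = d 0 1 (δ 0 0 (d 0 0 (δ 0 1 x))) := by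
    calc d 0 1 (δ 0 0 x)
        = d 0 1 (d 1 2 (δ 1 0 (δ 0 1 x))) := by
          rw [h.coface_coface 0 1 0 (by omega) (by omega), h.face_coface_eq 1 2 (by omega)]
      _ = d 0 1 (δ 0 0 (d 0 0 (δ 0 1 x))) := by
          rw [h.face_face 0 1 1 le_rfl (by omega), h.face_coface_gt 0 0 0 le_rfl (by omega)]
  exact h₁.trans h₂.symm

def topCofaceWord (δ : ∀ n : ℕ, ℕ → (G n →+ G (n + 1))) (z : G 0) : ∀ n, G n
  | 0 => z
  | n + 1 => δ n (n + 1) (topCofaceWord δ z n)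

theorem face_cofaceSum_of_level_zero (h : IsBiDelta G d δ) (x : G 0) {m n j : ℕ} (hjm : j ≤ m)
    (hmn : m ≤ n + 1) :
    d n j (cofaceSum δ x (m + 1) (n + 1)) =
      cofaceSum δ x m n + if m = n + 1 then topCofaceWord δ (d 0 1 (δ 0 0 x)) n else 0 := by
  set Q : ℕ → ∀ n, G n := fun m n =>
    if m = n + 1 then topCofaceWord δ (d 0 1 (δ 0 0 x)) n else 0
  have hQ : IsCofaceRecursive δ Q := by
    intro m n hmn
    rcases hmn.eq_or_lt with rfl | hmn
    · simp [Q, topCofaceWord]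
    · simp [Q, hmn.ne, (hmn.trans (Nat.lt_succ_self _)).ne]
  have h₀ : ∀ n j, j ≤ n + 1 → d n j (cofaceSum δ x 0 (n + 1)) = Q 0 n := by
    intro n j _
    simp [Q, cofaceSum_zero]
  have h₁ : d 0 1 (cofaceSum δ x 1 1) = Q 1 0 := by
    simp [Q, cofaceSum_succ_succ, cofaceSum_zero, topCofaceWord]
  have h₂ : d 0 0 (cofaceSum δ x 2 1) = cofaceSum δ x 1 0 + Q 1 0 := by
    simp [Q, cofaceSum_succ_succ, cofaceSum_zero, cofaceSum_self, topCofaceWord,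
      h.face_coface_eq 0 0 (by omega), face_zero_coface_one h]
  exact (isCofaceRecursive_cofaceSum x).face_succ_eq_of_ge h hQ h₀ h₁ h₂ m n j hjm hmn

theorem cofaceSum_mem_cohenAll (h : IsBiDelta G d δ) {k : ℕ} {x : G k}
    (hx : x ∈ cohenAll G d k) (n : ℕ) : cofaceSum δ x (n + 1) n ∈ cohenAll G d n := by
  cases n with
  | zero => exact AddSubgroup.mem_top _
  | succ n =>
    refine mem_cohenAll_succ.2 fun j hj => ?_
    cases k with
    | zero =>
      exact (face_cofaceSum_of_level_zero h x hj le_rfl).trans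
        (face_cofaceSum_of_level_zero h x (Nat.zero_le _) le_rfl).symm
    | succ k =>
      exact (face_cofaceSum_of_mem_cohenAll h hx hj le_rfl).trans
        (face_cofaceSum_of_mem_cohenAll h hx (Nat.zero_le _) le_rfl).symm

end

/-- For an abelian bi-Δ-group `G` and `k ≤ n` (here `n = k + r`),
the James–Hopf homomorphism maps the Cohen group `𝔥_k G` into `𝔥_n G` (membership in
`cohenAll G d (k+r)` says precisely that all the faces of `H_{k,n}(x)` coincide),
and it is a group homomorphism. -/
theorem stmt6 (G : ℕ → Type u) [∀ n, AddCommGroup (G n)]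
    (d : ∀ n : ℕ, ℕ → (G (n + 1) →+ G n)) (δ : ∀ n : ℕ, ℕ → (G n →+ G (n + 1)))
    (h : IsBiDelta G d δ) (k r : ℕ) :
    (∀ x ∈ cohenAll G d k, jamesHopf G δ k r x ∈ cohenAll G d (k + r)) ∧
    ∀ x y : G k, jamesHopf G δ k r (x + y) = jamesHopf G δ k r x + jamesHopf G δ k r y := by
  refine ⟨fun x hx => ?_, jamesHopf_add k r⟩
  rw [jamesHopf_eq_cofaceSum]
  exact cofaceSum_mem_cohenAll h hx (k + r)
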